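/- Let F : ℝ^p → ℝ be L-smooth and bounded below by F*. Consider deterministic delayed gradient descent θ_{t+1} = θ_t - η ∇F(θ_{t-τ(t)}) with delay τ(t) ∈ {0,1} and ηL ≤ 1/2. Assume gradients are uniformly bounded: ‖∇F(θ)‖ ≤ G. Then there is an absolute constant C such that (1/T) ∑_{t=0}^{T-1} ‖∇F(θ_t)‖² ≤ 2(F(θ_0) - F*)/(ηT) + 4C η²L²G². -/

import Mathlib

open InnerProductSpace

lemma descent_lemma {p : ℕ} {F : EuclideanSpace ℝ (Fin p) → ℝ} {L : ℝ}
    (hF : Differentiable ℝ F)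
    (hLip : ∀ x y, ‖gradient F x - gradient F y‖ ≤ L * ‖x - y‖)
    (x y : EuclideanSpace ℝ (Fin p)) :
    F y ≤ F x + inner ℝ (gradient F x) (y - x) + L / 2 * ‖y - x‖ ^ 2 := by
  set c : ℝ → EuclideanSpace ℝ (Fin p) := fun t => x + t • (y - x) with hc
  set A : ℝ := inner ℝ (gradient F x) (y - x) with hA
  set B : ℝ := ‖y - x‖ ^ 2 with hB
  set h : ℝ → ℝ := fun t => F (c t) - A * t - (L / 2 * B) * t ^ 2 with hh
  have hcd : ∀ t : ℝ, HasDerivAt c (y - x) t := by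
    intro t
    simpa [hc] using ((hasDerivAt_id t).smul_const (y - x)).const_add x
  have hd : ∀ t : ℝ, HasDerivAt h
      ((inner ℝ (gradient F (c t)) (y - x) : ℝ) - A - (L / 2 * B) * (2 * t)) t := by
    intro t
    have h1 : HasDerivAt (fun t => F (c t)) ((inner ℝ (gradient F (c t)) (y - x) : ℝ)) t := by
      have := ((hF (c t)).hasGradientAt.hasFDerivAt).comp_hasDerivAt t (hcd t)
      exact this
    have h2 : HasDerivAt (fun t : ℝ => A * t) A t := by
      simpa using (hasDerivAt_id t).const_mul A
    have h3 : HasDerivAt (fun t : ℝ => (L / 2 * B) * t ^ 2) ((L / 2 * B) * (2 * t)) t := by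
      have := (hasDerivAt_pow 2 t).const_mul (L / 2 * B)
      simpa [mul_comm] using this
    exact (h1.sub h2).sub h3
  have hanti : AntitoneOn h (Set.Icc (0:ℝ) 1) := by
    apply antitoneOn_of_deriv_nonpos (convex_Icc 0 1)
    · exact (fun t _ => ((hd t).differentiableAt.continuousAt.continuousWithinAt))
    · exact fun t _ => (hd t).differentiableAt.differentiableWithinAt
    · intro t ht
      rw [interior_Icc] at ht
      rw [(hd t).deriv]
      have hcs : (inner ℝ (gradient F (c t)) (y - x) : ℝ) - A ≤ L * t * B := by
        have h1 : (inner ℝ (gradient F (c t)) (y - x) : ℝ) - A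
            = inner ℝ (gradient F (c t) - gradient F x) (y - x) := by
          rw [hA, inner_sub_left]
        rw [h1]
        calc (inner ℝ (gradient F (c t) - gradient F x) (y - x) : ℝ)
            ≤ ‖gradient F (c t) - gradient F x‖ * ‖y - x‖ := real_inner_le_norm _ _
          _ ≤ (L * ‖c t - x‖) * ‖y - x‖ := by
              apply mul_le_mul_of_nonneg_right (hLip _ _) (norm_nonneg _)
          _ = L * t * B := by
              have : c t - x = t • (y - x) := by simp [hc]
              rw [this, norm_smul, hB]
              rw [Real.norm_eq_abs, abs_of_pos ht.1]
              ring
      nlinarith [hcs]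
  have h10 : h 1 ≤ h 0 := hanti (by norm_num) (by norm_num) (by norm_num)
  have hc0 : c 0 = x := by simp [hc]
  have hc1 : c 1 = y := by simp [hc]
  simp only [hh, hc0, hc1] at h10
  nlinarith [h10]

/-- deterministic delayed gradient descent with delay at most one
step.  There is an absolute constant `K > 0` such that for every `L`-smooth `F`
bounded below by `F*`, with uniformly bounded gradients `‖∇F(θ)‖ ≤ G`, stepsize
`ηL ≤ 1/2`, and iterates `θ_{t+1} = θ_t - η ∇F(θ_{t-τ(t)})` with `τ(t) ∈ {0,1}`,
the average squared gradient norm satisfies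
`(1/T) ∑_{t<T} ‖∇F(θ_t)‖² ≤ 2(F(θ_0) - F*)/(ηT) + 4η²L²G²·K`. -/
theorem delayed_gd_convergence :
    ∃ K : ℝ, 0 < K ∧
      ∀ (p : ℕ) (F : EuclideanSpace ℝ (Fin p) → ℝ) (L G η Fstar : ℝ)
        (θ : ℕ → EuclideanSpace ℝ (Fin p)) (τ : ℕ → ℕ) (T : ℕ),
        0 < L → 0 < η → η * L ≤ 1 / 2 → 0 < G → 0 < T →
        Differentiable ℝ F →
        (∀ x y, ‖gradient F x - gradient F y‖ ≤ L * ‖x - y‖) →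
        (∀ x, Fstar ≤ F x) →
        (∀ x, ‖gradient F x‖ ≤ G) →
        (∀ t, τ t ≤ 1) →
        (∀ t, θ (t + 1) = θ t - η • gradient F (θ (t - τ t))) →
        (1 / (T : ℝ)) * ∑ t ∈ Finset.range T, ‖gradient F (θ t)‖ ^ 2 ≤
          2 * (F (θ 0) - Fstar) / (η * T) + 4 * η ^ 2 * L ^ 2 * G ^ 2 * K := by
  refine ⟨1/4, by norm_num, ?_⟩
  intro p F L G η Fstar θ τ T hL hη hηL hG hT hF hLip hFstar hGbd hτ hstep
  set a : ℕ → EuclideanSpace ℝ (Fin p) := fun t => gradient F (θ t) with ha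
  set b : ℕ → EuclideanSpace ℝ (Fin p) := fun t => gradient F (θ (t - τ t)) with hb
  have hstepbd : ∀ t, ‖θ t - θ (t - τ t)‖ ≤ η * G := by
    intro t
    rcases Nat.le_one_iff_eq_zero_or_eq_one.mp (hτ t) with h0 | h1
    · rw [h0]; simp; positivity
    · rcases Nat.eq_zero_or_eq_succ_pred t with h | h
      · rw [h]; simp; positivity
      · rw [h1]
        set s := t - 1 with hs
        have ht1 : t = s + 1 := h
        rw [ht1]
        have : θ (s + 1) = θ s - η • gradient F (θ (s - τ s)) := hstep s
        rw [this]
        have : θ s - η • gradient F (θ (s - τ s)) - θ s = -(η • gradient F (θ (s - τ s))) := by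
          abel
        rw [this, norm_neg, norm_smul, Real.norm_eq_abs, abs_of_pos hη]
        exact mul_le_mul_of_nonneg_left (hGbd _) hη.le
  have key : ∀ t, F (θ (t + 1)) ≤ F (θ t) - η / 2 * ‖a t‖ ^ 2 + η ^ 3 / 2 * L ^ 2 * G ^ 2 := by
    intro t
    have hd := descent_lemma hF hLip (θ t) (θ (t + 1))
    have hdiff : θ (t + 1) - θ t = -(η • b t) := by rw [hstep t]; abel
    rw [hdiff] at hd
    have hinner : (inner ℝ (a t) (-(η • b t)) : ℝ) = -(η * inner ℝ (a t) (b t)) := by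
      rw [inner_neg_right, real_inner_smul_right]
    have hnorm : ‖-(η • b t)‖ ^ 2 = η ^ 2 * ‖b t‖ ^ 2 := by
      rw [norm_neg, norm_smul, Real.norm_eq_abs, mul_pow, sq_abs]
    rw [hinner, hnorm] at hd
    have hab : ‖a t - b t‖ ≤ L * (η * G) :=
      le_trans (hLip _ _) (mul_le_mul_of_nonneg_left (hstepbd t) hL.le)
    have hexp : ‖a t - b t‖ ^ 2 = ‖a t‖ ^ 2 - 2 * inner ℝ (a t) (b t) + ‖b t‖ ^ 2 := by
      rw [@norm_sub_sq_real]
    have hab2 : ‖a t - b t‖ ^ 2 ≤ (L * (η * G)) ^ 2 := by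
      nlinarith [norm_nonneg (a t - b t)]
    have h1 : η * ‖a t - b t‖ ^ 2 ≤ η * (L * (η * G)) ^ 2 :=
      mul_le_mul_of_nonneg_left hab2 hη.le
    have h2 : 0 ≤ η * (1 - η * L) * ‖b t‖ ^ 2 := by
      apply mul_nonneg (mul_nonneg hη.le (by linarith)) (sq_nonneg _)
    nlinarith [hd, hexp]
  have hsum : ∑ t ∈ Finset.range T, (η / 2 * ‖a t‖ ^ 2) ≤
      F (θ 0) - Fstar + T * (η ^ 3 / 2 * L ^ 2 * G ^ 2) := by
    have h1 : ∑ t ∈ Finset.range T, (η / 2 * ‖a t‖ ^ 2) ≤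
        ∑ t ∈ Finset.range T, (F (θ t) - F (θ (t + 1)) + η ^ 3 / 2 * L ^ 2 * G ^ 2) :=
      Finset.sum_le_sum fun t _ => by linarith [key t]
    rw [Finset.sum_add_distrib, Finset.sum_range_sub' (fun t => F (θ t)), Finset.sum_const,
      Finset.card_range, nsmul_eq_mul] at h1
    linarith [hFstar (θ T)]
  have hTpos : (0 : ℝ) < T := by exact_mod_cast hT
  set S : ℝ := ∑ t ∈ Finset.range T, ‖a t‖ ^ 2 with hS
  have hS' : η / 2 * S ≤ F (θ 0) - Fstar + T * (η ^ 3 / 2 * L ^ 2 * G ^ 2) := by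
    rw [hS, Finset.mul_sum] at *
    exact hsum
  calc (1 / (T : ℝ)) * S = (η * S) / (η * T) := by
        field_simp
    _ ≤ (2 * (F (θ 0) - Fstar) + η * T * (η ^ 2 * L ^ 2 * G ^ 2)) / (η * T) := by
        apply div_le_div_of_nonneg_right ?_ (by positivity)
        nlinarith [hS']
    _ = 2 * (F (θ 0) - Fstar) / (η * T) + 4 * η ^ 2 * L ^ 2 * G ^ 2 * (1/4) := by
        field_simp
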